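/- arXiv:2201.01919 — 4 statements merged into one kernel-verified Lean document; each statement's English description precedes it below -/
import Mathlib

section
/- Let S be a p×p symmetric positive definite matrix, and let Γ₁ be a p×u matrix and Γ₀ a p×(p−u) matrix such that [Γ₁ Γ₀] is a p×p orthogonal matrix. Then det(Γ₀ᵀ S Γ₀) = det(Γ₁ᵀ S⁻¹ Γ₁) · det(S). -/
/-!
With `L = [Γ₁ᵀ S⁻¹; Γ₀ᵀ]` and `G = [Γ₁ Γ₀]`, the square matrices `L G` and `L S G` are block
triangular with diagonal blocks `(Γ₁ᵀ S⁻¹ Γ₁, 1)` and `(1, Γ₀ᵀ S Γ₀)` respectively, while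
`det (L S G) = det (L G) * det S`.
-/

open Matrix

theorem Matrix.card_le_card_of_transpose_mul_self_eq_one {m n K : Type*} [Fintype m]
    [DecidableEq m] [Fintype n] [Field K] {A : Matrix n m K} (hA : Aᵀ * A = 1) :
    Fintype.card m ≤ Fintype.card n :=
  calc Fintype.card m = (Aᵀ * A).rank := by rw [hA, rank_one]
    _ ≤ A.rank := rank_mul_le_right _ _
    _ ≤ Fintype.card n := rank_le_card_height A

section

variable {R : Type*} [CommRing R] {m n : Type*} [Fintype m] [DecidableEq m] [Fintype n]
  [DecidableEq n]

theorem Matrix.det_mul_mul_eq_det_mul_mul_det (hcard : Fintype.card m = Fintype.card n)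
    (A : Matrix m n R) (S : Matrix n n R) (B : Matrix n m R) :
    (A * S * B).det = (A * B).det * S.det := by
  obtain ⟨e⟩ : Nonempty (m ≃ n) := Fintype.card_eq.mp hcard
  have hAS : A.submatrix id e * S.submatrix e e = (A * S).submatrix id e :=
    submatrix_mul_equiv A S id e e
  have hASB : (A * S).submatrix id e * B.submatrix e id = A * S * B :=
    submatrix_mul_equiv (A * S) B id e id
  have hAB : A.submatrix id e * B.submatrix e id = A * B := submatrix_mul_equiv A B id e id
  rw [← hASB, ← hAS, det_mul, det_mul, ← hAB, det_mul, det_submatrix_equiv_self]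
  ring

theorem Matrix.det_transpose_mul_mul_eq_det_transpose_mul_inv_mul_mul_det {m₁ m₀ : Type*}
    [Fintype m₁] [DecidableEq m₁] [Fintype m₀] [DecidableEq m₀]
    (hcard : Fintype.card m₁ + Fintype.card m₀ = Fintype.card n)
    {S : Matrix n n R} (hS : IsUnit S.det) {Γ₁ : Matrix n m₁ R} {Γ₀ : Matrix n m₀ R}
    (h1 : Γ₁ᵀ * Γ₁ = 1) (h0 : Γ₀ᵀ * Γ₀ = 1) (h10 : Γ₁ᵀ * Γ₀ = 0) :
    (Γ₀ᵀ * S * Γ₀).det = (Γ₁ᵀ * S⁻¹ * Γ₁).det * S.det := by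
  have h01 : Γ₀ᵀ * Γ₁ = 0 := by simpa using congrArg transpose h10
  set L := fromRows (Γ₁ᵀ * S⁻¹) Γ₀ᵀ
  set G := fromCols Γ₁ Γ₀
  have hLG : L * G = fromBlocks (Γ₁ᵀ * S⁻¹ * Γ₁) (Γ₁ᵀ * S⁻¹ * Γ₀) 0 1 := by
    rw [fromRows_mul_fromCols, h01, h0]
  have hLSG : L * S * G = fromBlocks 1 0 (Γ₀ᵀ * S * Γ₁) (Γ₀ᵀ * S * Γ₀) := by
    rw [fromRows_mul, fromRows_mul_fromCols, Matrix.mul_assoc Γ₁ᵀ, nonsing_inv_mul S hS,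
      Matrix.mul_one, h1, h10]
  have hdet := det_mul_mul_eq_det_mul_mul_det (by simpa using hcard) L S G
  rwa [hLG, hLSG, det_fromBlocks_zero₁₂, det_fromBlocks_zero₂₁, det_one, det_one, one_mul,
    mul_one] at hdet

end

theorem stmt0_general (p u : ℕ) (S : Matrix (Fin p) (Fin p) ℝ)
    (Γ₁ : Matrix (Fin p) (Fin u) ℝ) (Γ₀ : Matrix (Fin p) (Fin (p - u)) ℝ)
    (hS : S.PosDef)
    (h1 : Γ₁ᵀ * Γ₁ = 1) (h0 : Γ₀ᵀ * Γ₀ = 1) (h10 : Γ₁ᵀ * Γ₀ = 0) :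
    (Γ₀ᵀ * S * Γ₀).det = (Γ₁ᵀ * S⁻¹ * Γ₁).det * S.det := by
  have hu : u ≤ p := by simpa using card_le_card_of_transpose_mul_self_eq_one h1
  exact det_transpose_mul_mul_eq_det_transpose_mul_inv_mul_mul_det
    (by simpa using Nat.add_sub_cancel' hu) ((isUnit_iff_isUnit_det S).mp hS.isUnit) h1 h0 h10

theorem stmt0 (p u : ℕ) (S : Matrix (Fin p) (Fin p) ℝ)
    (Γ₁ : Matrix (Fin p) (Fin u) ℝ) (Γ₀ : Matrix (Fin p) (Fin (p - u)) ℝ)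
    (hS : S.PosDef)
    (h1 : Γ₁ᵀ * Γ₁ = 1) (h0 : Γ₀ᵀ * Γ₀ = 1) (h10 : Γ₁ᵀ * Γ₀ = 0)
    (hfull : Γ₁ * Γ₁ᵀ + Γ₀ * Γ₀ᵀ = 1) :
    (Γ₀ᵀ * S * Γ₀).det = (Γ₁ᵀ * S⁻¹ * Γ₁).det * S.det :=
  stmt0_general p u S Γ₁ Γ₀ hS h1 h0 h10
end

section
/- Under the envelope parameterization Σ_X = Γ₁Ω₁Γ₁ᵀ + Γ₀Ω₀Γ₀ᵀ with Σ_{XY} = Γ₁Ω₁η, the regression coefficient matrix β = Σ_X⁻¹Σ_{XY} equals Γ₁η. -/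
open Matrix

theorem stmt2 (p u r : ℕ)
    (Γ₁ : Matrix (Fin p) (Fin u) ℝ) (Γ₀ : Matrix (Fin p) (Fin (p - u)) ℝ)
    (Ω₁ : Matrix (Fin u) (Fin u) ℝ) (Ω₀ : Matrix (Fin (p - u)) (Fin (p - u)) ℝ)
    (η : Matrix (Fin u) (Fin r) ℝ)
    (hΩ₁ : Ω₁.PosDef) (hΩ₀ : Ω₀.PosDef)
    (h1 : Γ₁ᵀ * Γ₁ = 1) (h0 : Γ₀ᵀ * Γ₀ = 1) (h10 : Γ₁ᵀ * Γ₀ = 0)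
    (hfull : Γ₁ * Γ₁ᵀ + Γ₀ * Γ₀ᵀ = 1) :
    (Γ₁ * Ω₁ * Γ₁ᵀ + Γ₀ * Ω₀ * Γ₀ᵀ)⁻¹ * (Γ₁ * Ω₁ * η) = Γ₁ * η := by
  have h01 : Γ₀ᵀ * Γ₁ = 0 := by
    have := congrArg Matrix.transpose h10
    simpa [Matrix.transpose_mul] using this
  have hd1 : IsUnit Ω₁.det := isUnit_iff_ne_zero.2 hΩ₁.det_pos.ne'
  have hd0 : IsUnit Ω₀.det := isUnit_iff_ne_zero.2 hΩ₀.det_pos.ne'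
  have e1 : Ω₁ * Ω₁⁻¹ = 1 := Matrix.mul_nonsing_inv _ hd1
  have e0 : Ω₀ * Ω₀⁻¹ = 1 := Matrix.mul_nonsing_inv _ hd0
  have e1' : Ω₁⁻¹ * Ω₁ = 1 := Matrix.nonsing_inv_mul _ hd1
  have h1' : ∀ {n : ℕ} (X : Matrix (Fin u) (Fin n) ℝ), Γ₁ᵀ * (Γ₁ * X) = X := fun X => by
    rw [← Matrix.mul_assoc, h1, Matrix.one_mul]
  have h0' : ∀ {n : ℕ} (X : Matrix (Fin (p-u)) (Fin n) ℝ), Γ₀ᵀ * (Γ₀ * X) = X := fun X => by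
    rw [← Matrix.mul_assoc, h0, Matrix.one_mul]
  have h10' : ∀ {n : ℕ} (X : Matrix (Fin (p-u)) (Fin n) ℝ), Γ₁ᵀ * (Γ₀ * X) = 0 := fun X => by
    rw [← Matrix.mul_assoc, h10, Matrix.zero_mul]
  have h01' : ∀ {n : ℕ} (X : Matrix (Fin u) (Fin n) ℝ), Γ₀ᵀ * (Γ₁ * X) = 0 := fun X => by
    rw [← Matrix.mul_assoc, h01, Matrix.zero_mul]
  have e1'' : ∀ {n : ℕ} (X : Matrix (Fin u) (Fin n) ℝ), Ω₁ * (Ω₁⁻¹ * X) = X := fun X => by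
    rw [← Matrix.mul_assoc, e1, Matrix.one_mul]
  have e0'' : ∀ {n : ℕ} (X : Matrix (Fin (p-u)) (Fin n) ℝ), Ω₀ * (Ω₀⁻¹ * X) = X := fun X => by
    rw [← Matrix.mul_assoc, e0, Matrix.one_mul]
  have hB : (Γ₁ * Ω₁ * Γ₁ᵀ + Γ₀ * Ω₀ * Γ₀ᵀ) * (Γ₁ * Ω₁⁻¹ * Γ₁ᵀ + Γ₀ * Ω₀⁻¹ * Γ₀ᵀ) = 1 := by
    simp only [Matrix.add_mul, Matrix.mul_add, Matrix.mul_assoc, h1', h0', h10', h01',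
      Matrix.mul_zero, Matrix.zero_mul, e1'', e0'', add_zero, zero_add]
    simpa [Matrix.mul_assoc] using hfull
  rw [Matrix.inv_eq_right_inv hB]
  simp only [Matrix.add_mul, Matrix.mul_assoc, h1', h01', Matrix.mul_zero, add_zero]
  rw [← Matrix.mul_assoc Ω₁⁻¹, e1', Matrix.one_mul]
end

section
/- Let J be a symmetric positive definite m×m matrix and H an m×k real matrix. Then J⁻¹ − H(HᵀJH)†Hᵀ is positive semidefinite, where † denotes the Moore–Penrose pseudoinverse. -/
open Matrix

/-- `G` satisfies the four Penrose conditions for `A`, i.e. `G` is the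
Moore–Penrose pseudoinverse of `A` (which is uniquely characterized by them). -/
def IsMoorePenroseInv {k : ℕ} (A G : Matrix (Fin k) (Fin k) ℝ) : Prop :=
  A * G * A = A ∧ G * A * G = G ∧ (A * G)ᵀ = A * G ∧ (G * A)ᵀ = G * A

/-!
The matrix `M = H G Hᵀ` is symmetric and satisfies `M J M = M`, so `MJ` is a `J`-orthogonal
projection and `J⁻¹ - M = (1 - MJ) J⁻¹ (1 - MJ)ᵀ` is a congruence transform of `J⁻¹ > 0`.
Symmetry of `G` comes from uniqueness of the Moore–Penrose inverse, since `Gᵀ` is the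
Moore–Penrose inverse of `Aᵀ = A`.
-/

namespace IsMoorePenroseInv

variable {k : ℕ} {A G X Y : Matrix (Fin k) (Fin k) ℝ}

theorem transpose (hG : IsMoorePenroseInv A G) : IsMoorePenroseInv Aᵀ Gᵀ := by
  obtain ⟨h₁, h₂, h₃, h₄⟩ := hG
  refine ⟨?_, ?_, ?_, ?_⟩
  · simpa only [transpose_mul, Matrix.mul_assoc] using congrArg Matrix.transpose h₁
  · simpa only [transpose_mul, Matrix.mul_assoc] using congrArg Matrix.transpose h₂
  · rw [transpose_mul, transpose_transpose, transpose_transpose, ← transpose_mul, h₄]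
  · rw [transpose_mul, transpose_transpose, transpose_transpose, ← transpose_mul, h₃]

theorem left_eq_mul_mul (hX : IsMoorePenroseInv A X) (hY : IsMoorePenroseInv A Y) :
    X = X * A * Y := by
  obtain ⟨hX₁, hX₂, hX₃, -⟩ := hX
  obtain ⟨hY₁, -, hY₃, -⟩ := hY
  have hXAX : X = X * Xᵀ * Aᵀ := by
    conv_lhs => rw [← hX₂, Matrix.mul_assoc, ← hX₃, transpose_mul, ← Matrix.mul_assoc]
  have hAY : Aᵀ = Aᵀ * (A * Y) := by
    conv_lhs => rw [← hY₁, transpose_mul, hY₃]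
  calc X = X * Xᵀ * Aᵀ * (A * Y) := by rw [Matrix.mul_assoc _ Aᵀ, ← hAY, ← hXAX]
    _ = X * A * Y := by rw [← hXAX, Matrix.mul_assoc]

theorem right_eq_mul_mul (hX : IsMoorePenroseInv A X) (hY : IsMoorePenroseInv A Y) :
    Y = X * A * Y := by
  obtain ⟨hX₁, -, -, hX₄⟩ := hX
  obtain ⟨-, hY₂, -, hY₄⟩ := hY
  have hYAY : Y = Aᵀ * Yᵀ * Y := by
    conv_lhs => rw [← hY₂, ← hY₄, transpose_mul]
  have hXA : Aᵀ = X * A * Aᵀ := by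
    conv_lhs => rw [← hX₁, Matrix.mul_assoc, transpose_mul, hX₄]
  calc Y = X * A * Aᵀ * Yᵀ * Y := by rw [← hXA, ← hYAY]
    _ = X * A * Y := by rw [Matrix.mul_assoc (X * A * Aᵀ), Matrix.mul_assoc (X * A),
        ← Matrix.mul_assoc Aᵀ, ← hYAY]

theorem unique (hX : IsMoorePenroseInv A X) (hY : IsMoorePenroseInv A Y) : X = Y :=
  (hX.left_eq_mul_mul hY).trans (hX.right_eq_mul_mul hY).symm

theorem transpose_eq_self (hA : Aᵀ = A) (hG : IsMoorePenroseInv A G) : Gᵀ = G :=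
  (hA ▸ hG.transpose).unique hG

end IsMoorePenroseInv

theorem Matrix.PosDef.posSemidef_inv_sub {n K : Type*} [Fintype n] [DecidableEq n] [Field K]
    [PartialOrder K] [StarRing K] {J M : Matrix n n K} (hJ : J.PosDef) (hM : M.IsHermitian)
    (hMJM : M * J * M = M) : (J⁻¹ - M).PosSemidef := by
  have hJdet : IsUnit J.det := (isUnit_iff_isUnit_det J).mp hJ.isUnit
  have hfactor : (1 - M * J) * J⁻¹ * (1 - M * J)ᴴ = J⁻¹ - M := by
    rw [conjTranspose_sub, conjTranspose_one, conjTranspose_mul, hM.eq, hJ.isHermitian.eq]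
    calc (1 - M * J) * J⁻¹ * (1 - J * M) = (J⁻¹ - M) * (1 - J * M) := by
          rw [Matrix.sub_mul, one_mul, Matrix.mul_assoc, mul_nonsing_inv _ hJdet, mul_one]
      _ = J⁻¹ - M := by
          rw [Matrix.mul_sub, Matrix.sub_mul, Matrix.sub_mul, mul_one, ← Matrix.mul_assoc,
            nonsing_inv_mul _ hJdet, one_mul, ← Matrix.mul_assoc, hMJM, mul_one, sub_self,
            sub_zero]
  rw [← hfactor]
  exact hJ.inv.posSemidef.mul_mul_conjTranspose_same _

theorem stmt7 (m k : ℕ) (J : Matrix (Fin m) (Fin m) ℝ) (H : Matrix (Fin m) (Fin k) ℝ)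
    (hJ : J.PosDef) (G : Matrix (Fin k) (Fin k) ℝ)
    (hG : IsMoorePenroseInv (Hᵀ * J * H) G) :
    (J⁻¹ - H * G * Hᵀ).PosSemidef := by
  have hJsymm : Jᵀ = J := hJ.isHermitian.eq
  have hGsymm : Gᵀ = G := hG.transpose_eq_self <| by
    rw [transpose_mul, transpose_mul, transpose_transpose, hJsymm, Matrix.mul_assoc]
  refine hJ.posSemidef_inv_sub ?_ ?_
  · change (H * G * Hᵀ)ᵀ = H * G * Hᵀ
    rw [transpose_mul, transpose_mul, transpose_transpose, hGsymm, Matrix.mul_assoc]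
  · calc H * G * Hᵀ * J * (H * G * Hᵀ) = H * (G * (Hᵀ * J * H) * G) * Hᵀ := by
          simp only [Matrix.mul_assoc]
      _ = H * G * Hᵀ := by rw [hG.2.1]
end

section
/- Let Σ_{Y|X} be positive definite r×r, [Γ₁ Γ₀] orthogonal with Γ₁ of size p×u (0 < u < p), Ω₁ and Ω₀ positive definite, and Σ_X = Γ₁Ω₁Γ₁ᵀ + Γ₀Ω₀Γ₀ᵀ. Then Σ_{Y|X} ⊗ Σ_X⁻¹ − Σ_{Y|X} ⊗ Γ₁Ω₁⁻¹Γ₁ᵀ = Σ_{Y|X} ⊗ Γ₀Ω₀⁻¹Γ₀ᵀ, and this difference is positive semidefinite. -/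
/-!
Because `[Γ₁ Γ₀]` is orthogonal, `Σ_X` is inverted blockwise:
`Σ_X⁻¹ = Γ₁ Ω₁⁻¹ Γ₁ᵀ + Γ₀ Ω₀⁻¹ Γ₀ᵀ`. By bilinearity of `⊗ₖ` the difference is then
`Σ_{Y|X} ⊗ₖ Γ₀ Ω₀⁻¹ Γ₀ᵀ`, a Kronecker product of positive semidefinite matrices.
-/

open Matrix Kronecker

namespace Matrix

variable {R m n k : Type*} [Fintype m] [Fintype n] [Fintype k]

lemma mul_mul_transpose_mul_mul_mul_transpose_eq_zero [CommSemiring R] {Γ₁ : Matrix m n R}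
    {Γ₀ : Matrix m k R} (h : Γ₁ᵀ * Γ₀ = 0) (A : Matrix n n R) (B : Matrix k k R) :
    Γ₁ * A * Γ₁ᵀ * (Γ₀ * B * Γ₀ᵀ) = 0 := by
  simp only [Matrix.mul_assoc]
  rw [← Matrix.mul_assoc Γ₁ᵀ, h, Matrix.zero_mul, Matrix.mul_zero, Matrix.mul_zero]

variable [DecidableEq n]

lemma mul_mul_transpose_mul_mul_mul_transpose [CommSemiring R] {Γ : Matrix m n R}
    (hΓ : Γᵀ * Γ = 1) (A B : Matrix n n R) :
    Γ * A * Γᵀ * (Γ * B * Γᵀ) = Γ * (A * B) * Γᵀ := by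
  simp only [Matrix.mul_assoc]
  rw [← Matrix.mul_assoc Γᵀ, hΓ, Matrix.one_mul]

variable [DecidableEq m] [DecidableEq k]

lemma inv_mul_mul_transpose_add_mul_mul_transpose [CommRing R]
    {Γ₁ : Matrix m n R} {Γ₀ : Matrix m k R} {Ω₁ : Matrix n n R} {Ω₀ : Matrix k k R}
    (hΩ₁ : IsUnit Ω₁.det) (hΩ₀ : IsUnit Ω₀.det)
    (h1 : Γ₁ᵀ * Γ₁ = 1) (h0 : Γ₀ᵀ * Γ₀ = 1) (h10 : Γ₁ᵀ * Γ₀ = 0)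
    (hfull : Γ₁ * Γ₁ᵀ + Γ₀ * Γ₀ᵀ = 1) :
    (Γ₁ * Ω₁ * Γ₁ᵀ + Γ₀ * Ω₀ * Γ₀ᵀ)⁻¹ = Γ₁ * Ω₁⁻¹ * Γ₁ᵀ + Γ₀ * Ω₀⁻¹ * Γ₀ᵀ := by
  have h01 : Γ₀ᵀ * Γ₁ = 0 := by simpa using congrArg transpose h10
  apply inv_eq_right_inv
  rw [Matrix.add_mul, Matrix.mul_add, Matrix.mul_add,
    mul_mul_transpose_mul_mul_mul_transpose h1, mul_mul_transpose_mul_mul_mul_transpose h0,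
    mul_mul_transpose_mul_mul_mul_transpose_eq_zero h10,
    mul_mul_transpose_mul_mul_mul_transpose_eq_zero h01,
    mul_nonsing_inv _ hΩ₁, mul_nonsing_inv _ hΩ₀]
  simpa using hfull

end Matrix

theorem stmt13_general (p u r : ℕ)
    (SYX : Matrix (Fin r) (Fin r) ℝ) (hS : SYX.PosDef)
    (Γ₁ : Matrix (Fin p) (Fin u) ℝ) (Γ₀ : Matrix (Fin p) (Fin (p - u)) ℝ)
    (Ω₁ : Matrix (Fin u) (Fin u) ℝ) (Ω₀ : Matrix (Fin (p - u)) (Fin (p - u)) ℝ)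
    (hΩ₁ : Ω₁.PosDef) (hΩ₀ : Ω₀.PosDef)
    (h1 : Γ₁ᵀ * Γ₁ = 1) (h0 : Γ₀ᵀ * Γ₀ = 1) (h10 : Γ₁ᵀ * Γ₀ = 0)
    (hfull : Γ₁ * Γ₁ᵀ + Γ₀ * Γ₀ᵀ = 1) :
    SYX ⊗ₖ (Γ₁ * Ω₁ * Γ₁ᵀ + Γ₀ * Ω₀ * Γ₀ᵀ)⁻¹ - SYX ⊗ₖ (Γ₁ * Ω₁⁻¹ * Γ₁ᵀ)
        = SYX ⊗ₖ (Γ₀ * Ω₀⁻¹ * Γ₀ᵀ) ∧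
      (SYX ⊗ₖ (Γ₁ * Ω₁ * Γ₁ᵀ + Γ₀ * Ω₀ * Γ₀ᵀ)⁻¹
        - SYX ⊗ₖ (Γ₁ * Ω₁⁻¹ * Γ₁ᵀ)).PosSemidef := by
  have hdiff : SYX ⊗ₖ (Γ₁ * Ω₁ * Γ₁ᵀ + Γ₀ * Ω₀ * Γ₀ᵀ)⁻¹ - SYX ⊗ₖ (Γ₁ * Ω₁⁻¹ * Γ₁ᵀ)
      = SYX ⊗ₖ (Γ₀ * Ω₀⁻¹ * Γ₀ᵀ) := by
    rw [inv_mul_mul_transpose_add_mul_mul_transpose ((isUnit_iff_isUnit_det _).mp hΩ₁.isUnit)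
      ((isUnit_iff_isUnit_det _).mp hΩ₀.isUnit) h1 h0 h10 hfull, kronecker_add, add_sub_cancel_left]
  have hΓ₀Ω₀ : (Γ₀ * Ω₀⁻¹ * Γ₀ᵀ).PosSemidef := by
    simpa only [conjTranspose_eq_transpose_of_trivial] using
      hΩ₀.inv.posSemidef.mul_mul_conjTranspose_same Γ₀
  exact ⟨hdiff, hdiff ▸ hS.posSemidef.kronecker hΓ₀Ω₀⟩

theorem stmt13 (p u r : ℕ) (hu : 0 < u) (hup : u < p)
    (SYX : Matrix (Fin r) (Fin r) ℝ) (hS : SYX.PosDef)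
    (Γ₁ : Matrix (Fin p) (Fin u) ℝ) (Γ₀ : Matrix (Fin p) (Fin (p - u)) ℝ)
    (Ω₁ : Matrix (Fin u) (Fin u) ℝ) (Ω₀ : Matrix (Fin (p - u)) (Fin (p - u)) ℝ)
    (hΩ₁ : Ω₁.PosDef) (hΩ₀ : Ω₀.PosDef)
    (h1 : Γ₁ᵀ * Γ₁ = 1) (h0 : Γ₀ᵀ * Γ₀ = 1) (h10 : Γ₁ᵀ * Γ₀ = 0)
    (hfull : Γ₁ * Γ₁ᵀ + Γ₀ * Γ₀ᵀ = 1) :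
    SYX ⊗ₖ (Γ₁ * Ω₁ * Γ₁ᵀ + Γ₀ * Ω₀ * Γ₀ᵀ)⁻¹ - SYX ⊗ₖ (Γ₁ * Ω₁⁻¹ * Γ₁ᵀ)
        = SYX ⊗ₖ (Γ₀ * Ω₀⁻¹ * Γ₀ᵀ) ∧
      (SYX ⊗ₖ (Γ₁ * Ω₁ * Γ₁ᵀ + Γ₀ * Ω₀ * Γ₀ᵀ)⁻¹
        - SYX ⊗ₖ (Γ₁ * Ω₁⁻¹ * Γ₁ᵀ)).PosSemidef :=
  stmt13_general p u r SYX hS Γ₁ Γ₀ Ω₁ Ω₀ hΩ₁ hΩ₀ h1 h0 h10 hfull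
end
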